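/- A bounded operator R : H²(∂𝔹) → H²₋(∂𝔹) is a Hankel operator (i.e. R = H_φ for some φ ∈ L^∞ₛ(∂𝔹), equivalently its matrix (⟨Rq^j, \bar q^k⟩) satisfies ⟨Rq^j, \bar q^k⟩ = ⟨Rq^{j-1}, \bar q^{k+1}⟩ for all j ≥ 1, k ≥ 1) if and only if ℙ₋ S R = R T, where S is the bilateral shift (Sf)(q) = q f(q) on L²ₛ(∂𝔹) and T the unilateral shift (Tf)(q) = q f(q) on H²(∂𝔹). -/

import Mathlib

noncomputable section

open Quaternion

/-- `ℓ²(ℕ, ℍ)`, modelling both `H²(∂𝔹)` (via the coefficients of `qʲ`, `j ≥ 0`) and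
`H²₋(∂𝔹)` (via the coefficients of `q^{-(m+1)}`, `m ≥ 0`) inside `L²ₛ(∂𝔹) ≅ ℓ²(ℤ, ℍ)`. -/
abbrev l2H := lp (fun _ : ℕ => Quaternion ℝ) 2

/-!
Both sides say that `R` intertwines the shift "j ↦ j + 1" on the input coefficients with the
shift "m + 1 ↦ m" on the output coefficients. On the basis vectors `lp.single 2 j 1` this is the
constant-antidiagonal condition; right linearity transfers it to `lp.single 2 j c`, and since an
additive bounded `R` is continuous, it passes to `∑ⱼ lp.single 2 j (a j) = a` coefficientwise.
-/

open scoped ENNReal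

namespace lp

variable {α 𝕜 : Type*} [NormedRing 𝕜] {p : ℝ≥0∞}

theorem single_apply_eq_single_one_mul [DecidableEq α] (i : α) (c : 𝕜) (n : α) :
    (lp.single p i c : lp (fun _ : α => 𝕜) p) n
      = (lp.single p i 1 : lp (fun _ : α => 𝕜) p) n * c := by
  simpa only [lp.single_apply, one_mul] using Pi.single_mul_left_apply i n (1 : 𝕜) fun _ => c

variable {E : Type*} [NormedAddCommGroup E]

theorem single_succ_apply_succ (i : ℕ) (c : E) (n : ℕ) :
    (lp.single p (i + 1) c : lp (fun _ : ℕ => E) p) (n + 1)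
      = (lp.single p i c : lp (fun _ : ℕ => E) p) n := by
  simp only [lp.single_apply, Pi.single_apply, Nat.add_right_cancel_iff]

variable [Fact (1 ≤ p)]

theorem hasSum_single_succ (hp : p ≠ ⊤) {a b : lp (fun _ : ℕ => E) p} (h0 : b 0 = 0)
    (hsucc : ∀ j, b (j + 1) = a j) : HasSum (fun j => lp.single p (j + 1) (a j)) b := by
  have hb := (hasSum_nat_add_iff' 1).mpr (lp.hasSum_single hp b)
  simpa only [hsucc, Finset.range_one, Finset.sum_singleton, h0, lp.single_zero, sub_zero]
    using hb

theorem hasSum_apply_map {ι F : Type*} [NormedAddCommGroup F] [NormedSpace ℝ F]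
    (G : lp (fun _ : α => E) p →+ lp (fun _ : α => F) p)
    (hG : Continuous G) {f : ι → lp (fun _ : α => E) p} {a : lp (fun _ : α => E) p}
    (hf : HasSum f a) (m : α) : HasSum (fun j => G (f j) m) (G a m) :=
  (hf.map G hG).map (lp.evalCLM ℝ _ p m) (lp.evalCLM ℝ _ p m).continuous

end lp

/-- Characterization of Hankel operators by the shift: a bounded (right `ℍ`-linear) operator
`R : H²(∂𝔹) → H²₋(∂𝔹)` is a Hankel operator (its matrix has constant antidiagonals:
`⟨R qʲ, q̄ᵏ⟩ = ⟨R q^{j-1}, q̄^{k+1}⟩` for `j, k ≥ 1`) iff `ℙ₋ S R = R T`, where `S` is the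
bilateral shift `(Sf)(q) = q f(q)` on `L²ₛ(∂𝔹)` and `T` the unilateral shift on `H²(∂𝔹)`.
In coefficients: `ℙ₋ S` acts on `H²₋` by `w ↦ (m ↦ w (m+1))` and `T` acts on `H²` by
prepending a zero coefficient. -/
theorem hankel_iff_shift_relation (R : l2H → l2H)
    (hadd : ∀ a b : l2H, R (a + b) = R a + R b)
    (hlin : ∀ (a b : l2H) (p : Quaternion ℝ),
      (∀ n : ℕ, b n = a n * p) → ∀ n : ℕ, (R b) n = (R a) n * p)
    (hbdd : ∃ C : ℝ, ∀ a : l2H, ‖R a‖ ≤ C * ‖a‖) :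
    (∀ j k : ℕ, (R (lp.single 2 (j + 1) (1 : Quaternion ℝ))) k
        = (R (lp.single 2 j (1 : Quaternion ℝ))) (k + 1))
    ↔
    (∀ a b : l2H, b 0 = 0 → (∀ j : ℕ, b (j + 1) = a j) →
      ∀ m : ℕ, (R b) m = (R a) (m + 1)) := by
  constructor
  · intro hankel a b hb0 hbs m
    obtain ⟨C, hC⟩ := hbdd
    let G : l2H →+ l2H := AddMonoidHom.mk' R hadd
    have hG : Continuous G := AddMonoidHomClass.continuous_of_bound G C hC
    have hR_single (j : ℕ) (c : Quaternion ℝ) :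
        R (lp.single 2 (j + 1) c) m = R (lp.single 2 j c) (m + 1) := by
      rw [hlin _ _ c (lp.single_apply_eq_single_one_mul _ c) m,
        hlin _ _ c (lp.single_apply_eq_single_one_mul _ c) (m + 1), hankel]
    have hRb := lp.hasSum_apply_map G hG (lp.hasSum_single_succ (by norm_num) hb0 hbs) m
    have hRa := lp.hasSum_apply_map G hG (lp.hasSum_single (by norm_num) a) (m + 1)
    exact (hRb.congr_fun fun j => (hR_single j (a j)).symm).unique hRa
  · intro hshift j k
    exact hshift _ _ (lp.single_apply_ne 2 _ _ (Nat.succ_ne_zero j).symm)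
      (lp.single_succ_apply_succ j 1) k
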